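/- arXiv:1809.02661 — 4 statements merged into one kernel-verified Lean document; each statement's English description precedes it below -/
import Mathlib

section
/- Let d ≥ 1 be an integer, let z, w ∈ ℂ^d with z ≠ w, and fix j ∈ {1,…,d}. Then the function t ↦ (1/(2πi t)^d) · ((z̄_j − w̄_j)/(4t)) · e^{-‖z−w‖²/(4t)} is integrable on (0,∞) and ∫_{t=0}^{∞} (1/(2πi t)^d) ((z̄_j − w̄_j)/(4t)) e^{-‖z−w‖²/(4t)} dt = (4^{d-1}(d-1)!/(2πi)^d) · (z̄_j − w̄_j)/‖z−w‖^{2d}. Equivalently, away from the diagonal the ε→0, L→∞ limit of the scalar coefficient of the regularized propagator P_{ε<L}(z,w) exists and is proportional to the corresponding coefficient (z̄_j − w̄_j)/‖z−w‖^{2d} of the Bochner–Martinelli kernel. -/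
/-!
Substituting `t = 1/y` turns `∫₀^∞ t^{-(d+1)} e^{-c/t} dt` into the Gamma integral
`∫₀^∞ y^{d-1} e^{-c y} dy = (d-1)!/c^d`. With `c = ‖z - w‖²/4`, the integrand is this real
function times the constant `(z̄_j - w̄_j)/(4 (2πi)^d)`.
-/

open MeasureTheory Set Real

section InverseGamma

variable {s c : ℝ}

/-- The Gamma integrand after the change of variables `y = x⁻¹` of `integral_comp_rpow_Ioi`. -/
lemma abs_neg_one_mul_rpow_smul_rpow_mul_exp_inv {x : ℝ} (hx : 0 < x) :
    (|(-1 : ℝ)| * x ^ ((-1 : ℝ) - 1)) • ((x ^ (-1 : ℝ)) ^ (s - 1) * exp (-(c * x ^ (-1 : ℝ))))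
      = x ^ (-(s + 1)) * exp (-(c / x)) := by
  rw [rpow_neg_one, inv_rpow hx.le, ← rpow_neg hx.le, smul_eq_mul, abs_neg, abs_one, one_mul,
    ← mul_assoc, ← rpow_add hx, div_eq_mul_inv]
  ring_nf

lemma integrableOn_rpow_neg_mul_exp_neg_div_Ioi (hs : 0 < s) (hc : 0 < c) :
    IntegrableOn (fun t : ℝ => t ^ (-(s + 1)) * exp (-(c / t))) (Ioi 0) := by
  have hGamma : IntegrableOn (fun y : ℝ => y ^ (s - 1) * exp (-(c * y))) (Ioi 0) := by
    simpa [rpow_one] using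
      integrableOn_rpow_mul_exp_neg_mul_rpow (s := s - 1) (by linarith) one_pos hc
  exact ((integrableOn_Ioi_comp_rpow_iff _ (by norm_num)).mpr hGamma).congr_fun
    (fun _ hx => abs_neg_one_mul_rpow_smul_rpow_mul_exp_inv hx) measurableSet_Ioi

lemma integral_rpow_neg_mul_exp_neg_div_Ioi (hs : 0 < s) (hc : 0 < c) :
    ∫ t in Ioi (0 : ℝ), t ^ (-(s + 1)) * exp (-(c / t)) = Gamma s / c ^ s := by
  rw [← setIntegral_congr_fun measurableSet_Ioi
      (fun _ hx => abs_neg_one_mul_rpow_smul_rpow_mul_exp_inv hx),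
    integral_comp_rpow_Ioi (fun y => y ^ (s - 1) * exp (-(c * y))) (by norm_num),
    integral_rpow_mul_exp_neg_mul_Ioi hs hc, one_div, inv_rpow hc.le, inv_mul_eq_div]

end InverseGamma

section NatExponent

variable {d : ℕ} {c : ℝ}

lemma inv_pow_succ_eq_rpow_neg {t : ℝ} (ht : 0 < t) :
    (t ^ (d + 1))⁻¹ = t ^ (-((d : ℝ) + 1)) := by
  rw [rpow_neg ht.le, ← Nat.cast_add_one, rpow_natCast]

lemma integrableOn_inv_pow_mul_exp_neg_div_Ioi (hd : 0 < d) (hc : 0 < c) :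
    IntegrableOn (fun t : ℝ => (t ^ (d + 1))⁻¹ * exp (-(c / t))) (Ioi 0) :=
  (integrableOn_rpow_neg_mul_exp_neg_div_Ioi (Nat.cast_pos.mpr hd) hc).congr_fun
    (fun _ ht => by rw [inv_pow_succ_eq_rpow_neg ht]) measurableSet_Ioi

lemma integral_inv_pow_mul_exp_neg_div_Ioi (hd : 0 < d) (hc : 0 < c) :
    ∫ t in Ioi (0 : ℝ), (t ^ (d + 1))⁻¹ * exp (-(c / t)) = (d - 1).factorial / c ^ d := by
  have hGamma : Gamma d = (d - 1).factorial := by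
    rw [← Gamma_nat_eq_factorial, ← Nat.cast_add_one, Nat.sub_add_cancel hd]
  rw [setIntegral_congr_fun measurableSet_Ioi (fun _ ht => by rw [inv_pow_succ_eq_rpow_neg ht]),
    integral_rpow_neg_mul_exp_neg_div_Ioi (Nat.cast_pos.mpr hd) hc, hGamma, rpow_natCast]

end NatExponent

lemma propagator_integrand_eq_const_mul (d : ℕ) (X : ℂ) (r t : ℝ) :
    ((2 * (π : ℂ) * Complex.I * (t : ℂ)) ^ d)⁻¹ * (X / (4 * (t : ℂ))) *
        Complex.exp ((-(r / (4 * t)) : ℝ) : ℂ) =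
      X / (4 * (2 * (π : ℂ) * Complex.I) ^ d) *
        (((t ^ (d + 1))⁻¹ * exp (-(r / 4 / t)) : ℝ) : ℂ) := by
  push_cast
  ring_nf

/-- For `d ≥ 1`, `z ≠ w` in `ℂ^d` and `j ∈ {1,…,d}`, the function
`t ↦ (1/(2πi t)^d) ((z̄_j − w̄_j)/(4t)) e^{-‖z−w‖²/(4t)}` is integrable on `(0,∞)` and its
integral equals `(4^{d-1}(d-1)!/(2πi)^d) (z̄_j − w̄_j)/‖z−w‖^{2d}`; i.e. the `ε→0, L→∞` limit
of the regularized propagator coefficient is the Bochner–Martinelli coefficient. -/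
theorem stmt_2 (d : ℕ) (hd : 1 ≤ d) (z w : EuclideanSpace ℂ (Fin d)) (hzw : z ≠ w)
    (j : Fin d) :
    IntegrableOn (fun t : ℝ =>
        ((2 * (Real.pi : ℂ) * Complex.I * (t : ℂ)) ^ d)⁻¹ *
          ((starRingEnd ℂ (z j) - starRingEnd ℂ (w j)) / (4 * (t : ℂ))) *
          Complex.exp ((-(‖z - w‖ ^ 2 / (4 * t)) : ℝ) : ℂ))
      (Set.Ioi 0) volume ∧
    (∫ t in Set.Ioi (0 : ℝ),
        ((2 * (Real.pi : ℂ) * Complex.I * (t : ℂ)) ^ d)⁻¹ *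
          ((starRingEnd ℂ (z j) - starRingEnd ℂ (w j)) / (4 * (t : ℂ))) *
          Complex.exp ((-(‖z - w‖ ^ 2 / (4 * t)) : ℝ) : ℂ)) =
      ((4 ^ (d - 1) * (Nat.factorial (d - 1) : ℂ)) / (2 * (Real.pi : ℂ) * Complex.I) ^ d) *
        ((starRingEnd ℂ (z j) - starRingEnd ℂ (w j)) / ((‖z - w‖ ^ (2 * d) : ℝ) : ℂ)) := by
  have hdist : 0 < ‖z - w‖ := norm_pos_iff.mpr (sub_ne_zero.mpr hzw)
  have hc : 0 < ‖z - w‖ ^ 2 / 4 := by positivity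
  simp only [propagator_integrand_eq_const_mul]
  refine ⟨(integrableOn_inv_pow_mul_exp_neg_div_Ioi hd hc).ofReal.const_mul _, ?_⟩
  rw [integral_const_mul, integral_complex_ofReal, integral_inv_pow_mul_exp_neg_div_Ioi hd hc]
  obtain ⟨n, rfl⟩ : ∃ n, d = n + 1 := ⟨d - 1, by omega⟩
  have hdistC : (‖z - w‖ : ℂ) ≠ 0 := by exact_mod_cast hdist.ne'
  simp only [Nat.add_sub_cancel]
  push_cast
  rw [div_pow, ← pow_mul]
  field_simp
  ring
end

section
/- Let d ≥ 2 and 2 ≤ k ≤ d be integers. Let V be a complex vector space with basis {e_i^α : 1 ≤ i ≤ d, 1 ≤ α ≤ k−1}, and for each α ∈ {1,…,k−1} let f_α ∈ V^* be any linear functional with f_α(e_i^β) = 0 whenever β ≠ α. In the exterior algebra Λ•V set μ^α = e_1^α ∧ ⋯ ∧ e_d^α and Θ = θ_1 ∧ ⋯ ∧ θ_d where θ_i = Σ_{α=1}^{k−1} e_i^α. Then (Σ_{α=1}^{k−1} ι_{f_α}Θ) ∧ (ι_{f_1}μ^1) ∧ ⋯ ∧ (ι_{f_{k−1}}μ^{k−1})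 = 0 in Λ•V. -/
/-!
Put `F = ∑ α, f α` and `A = ι_{f_1}μ^1 ∧ ⋯ ∧ ι_{f_{k-1}}μ^{k-1}`; the left-hand side is
`ι_F Θ ∧ A`. Since `f_β` kills the factors of `μ^α` for `β ≠ α`, we have
`ι_F μ^α = ι_{f_α} μ^α`, hence `ι_F ι_{f_α} μ^α = -ι_{f_α} ι_{f_α} μ^α = 0`, and by the graded
Leibniz rule `ι_F A = 0`.
On the other hand `Θ ∧ A` has degree `d + (k-1)(d-1) > d(k-1) = dim V`, so it vanishes, and
`0 = ι_F (Θ ∧ A) = ι_F Θ ∧ A ± Θ ∧ ι_F A = ι_F Θ ∧ A`.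
-/

open CliffordAlgebra

namespace ExteriorAlgebra

variable {R M : Type*} [CommRing R] [AddCommGroup M] [Module R M]

theorem mul_mem_exteriorPower {m n : ℕ} {x y : ExteriorAlgebra R M}
    (hx : x ∈ ⋀[R]^m M) (hy : y ∈ ⋀[R]^n M) : x * y ∈ ⋀[R]^(m + n) M := by
  rw [exteriorPower, pow_add]; exact Submodule.mul_mem_mul hx hy

theorem list_prod_mem_exteriorPower {n : ℕ} {l : List (ExteriorAlgebra R M)}
    (hl : ∀ x ∈ l, x ∈ ⋀[R]^n M) : l.prod ∈ ⋀[R]^(l.length * n) M := by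
  induction l with
  | nil =>
    rw [List.prod_nil, List.length_nil, zero_mul, exteriorPower, pow_zero]
    exact Submodule.one_le.mp le_rfl
  | cons x l ih =>
    rw [List.prod_cons, List.length_cons, Nat.succ_mul, Nat.add_comm]
    exact mul_mem_exteriorPower (hl x List.mem_cons_self)
      (ih fun y hy => hl y (List.mem_cons_of_mem x hy))

theorem exteriorPower_eq_bot_of_finrank_lt [Nontrivial R] [Module.Free R M] [Module.Finite R M]
    {n : ℕ} (hn : Module.finrank R M < n) : ⋀[R]^n M = ⊥ :=
  Submodule.subsingleton_iff_eq_bot.mp <| (Module.finrank_eq_zero_iff_of_free R _).mp <| by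
    rw [exteriorPower.finrank_eq, Nat.choose_eq_zero_of_lt hn]

theorem contractLeft_mem_exteriorPower (d : Module.Dual R M) {n : ℕ} {x : ExteriorAlgebra R M}
    (hx : x ∈ ⋀[R]^(n + 1) M) : contractLeft d x ∈ ⋀[R]^n M := by
  induction n generalizing x with
  | zero =>
    rw [zero_add, exteriorPower, pow_one] at hx
    obtain ⟨m, rfl⟩ := hx
    rw [contractLeft_ι, exteriorPower, pow_zero]
    exact Submodule.algebraMap_mem _
  | succ n ih =>
    rw [exteriorPower, pow_succ'] at hx
    refine Submodule.mul_induction_on hx (fun y hy z hz => ?_) fun y z hy hz => ?_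
    · obtain ⟨m, rfl⟩ := hy
      rw [contractLeft_ι_mul]
      refine Submodule.sub_mem _ (Submodule.smul_mem _ _ hz) ?_
      rw [Nat.add_comm]
      exact mul_mem_exteriorPower (n := n) (m := 1) (by simp) (ih hz)
    · rw [map_add]; exact Submodule.add_mem _ hy hz

theorem contractLeft_mul_of_mem_exteriorPower (d : Module.Dual R M) {n : ℕ}
    {x : ExteriorAlgebra R M} (hx : x ∈ ⋀[R]^n M) (y : ExteriorAlgebra R M) :
    contractLeft d (x * y) = contractLeft d x * y + (-1 : R) ^ n • (x * contractLeft d y) := by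
  induction n generalizing x with
  | zero =>
    rw [exteriorPower, pow_zero] at hx
    obtain ⟨r, rfl⟩ := Submodule.mem_one.mp hx
    rw [contractLeft_algebraMap_mul, contractLeft_algebraMap, zero_mul, zero_add, pow_zero,
      one_smul]
  | succ n ih =>
    rw [exteriorPower, pow_succ'] at hx
    refine Submodule.mul_induction_on hx (fun u hu z hz => ?_) fun u v hu hv => ?_
    · obtain ⟨m, rfl⟩ := hu
      rw [mul_assoc, contractLeft_ι_mul, contractLeft_ι_mul, ih hz, pow_succ, mul_neg_one,
        neg_smul, sub_mul, mul_add, smul_mul_assoc, mul_smul_comm, ← mul_assoc, ← mul_assoc]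
      abel
    · simp only [add_mul, map_add, hu, hv, smul_add]
      abel

theorem contractLeft_ιMulti_eq_zero {d : Module.Dual R M} {n : ℕ} {v : Fin n → M}
    (hv : ∀ i, d (v i) = 0) : contractLeft d (ιMulti R n v) = 0 := by
  induction n with
  | zero => rw [ιMulti_zero_apply, contractLeft_one]
  | succ n ih =>
    rw [ιMulti_succ_apply, contractLeft_ι_mul, hv, ih (v := Matrix.vecTail v) fun i => hv i.succ,
      zero_smul, mul_zero, sub_zero]

theorem contractLeft_list_prod_eq_zero {d : Module.Dual R M} {n : ℕ}
    {l : List (ExteriorAlgebra R M)} (hl : ∀ x ∈ l, x ∈ ⋀[R]^n M)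
    (hd : ∀ x ∈ l, contractLeft d x = 0) : contractLeft d l.prod = 0 := by
  induction l with
  | nil => exact contractLeft_one 0 d
  | cons x l ih =>
    rw [List.prod_cons, contractLeft_mul_of_mem_exteriorPower d (hl x List.mem_cons_self),
      hd x List.mem_cons_self, ih (fun y hy => hl y (List.mem_cons_of_mem x hy))
        (fun y hy => hd y (List.mem_cons_of_mem x hy)), zero_mul, mul_zero, smul_zero, add_zero]

end ExteriorAlgebra

open ExteriorAlgebra

theorem stmt_3_general (d k : ℕ) (hd : 2 ≤ d) (hkd : k ≤ d)
    (V : Type*) [AddCommGroup V] [Module ℂ V]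
    (e : Module.Basis (Fin d × Fin (k - 1)) ℂ V)
    (f : Fin (k - 1) → Module.Dual ℂ V)
    (hf : ∀ (α β : Fin (k - 1)) (i : Fin d), β ≠ α → f α (e (i, β)) = 0) :
    (∑ α : Fin (k - 1),
        CliffordAlgebra.contractLeft (f α)
          ((List.ofFn fun i : Fin d =>
            ExteriorAlgebra.ι ℂ (∑ β : Fin (k - 1), e (i, β))).prod)) *
      (List.ofFn fun α : Fin (k - 1) =>
        CliffordAlgebra.contractLeft (f α)
          ((List.ofFn fun i : Fin d => ExteriorAlgebra.ι ℂ (e (i, α))).prod)).prod = 0 := by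
  have : Module.Finite ℂ V := .of_basis e
  simp only [← ιMulti_apply, ← LinearMap.sum_apply, ← map_sum]
  set F := ∑ α, f α
  set Θ := ιMulti ℂ d fun i => ∑ β, e (i, β)
  set μ := fun α => ιMulti ℂ d fun i => e (i, α)
  set L := List.ofFn fun α => contractLeft (f α) (μ α)
  have hΘ : Θ ∈ ⋀[ℂ]^d V := ιMulti_range ℂ d ⟨_, rfl⟩
  have hL : ∀ x ∈ L, x ∈ ⋀[ℂ]^(d - 1) V := by
    simp only [L, List.mem_ofFn, forall_exists_index, forall_apply_eq_imp_iff]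
    intro α
    refine contractLeft_mem_exteriorPower (f α) ?_
    rw [Nat.sub_add_cancel (by omega)]
    exact ιMulti_range ℂ d ⟨_, rfl⟩
  have hFμ α : contractLeft F (μ α) = contractLeft (f α) (μ α) := by
    rw [map_sum, LinearMap.sum_apply]
    refine Finset.sum_eq_single α (fun β _ hβ => ?_) (by simp)
    exact contractLeft_ιMulti_eq_zero fun i => hf β α i (Ne.symm hβ)
  have hFL : contractLeft F L.prod = 0 := by
    refine contractLeft_list_prod_eq_zero hL ?_
    simp only [L, List.mem_ofFn, forall_exists_index, forall_apply_eq_imp_iff]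
    intro α
    rw [contractLeft_comm, hFμ, contractLeft_contractLeft, neg_zero]
  have hrank : Module.finrank ℂ V < d + (k - 1) * (d - 1) := by
    rw [Module.finrank_eq_card_basis e, Fintype.card_prod, Fintype.card_fin, Fintype.card_fin]
    obtain ⟨d', rfl⟩ : ∃ d', d = d' + 1 := ⟨d - 1, by omega⟩
    have : k - 1 ≤ d' := by omega
    rw [Nat.add_sub_cancel]
    nlinarith
  have hΘL : Θ * L.prod = 0 := by
    rw [← Submodule.mem_bot ℂ, ← exteriorPower_eq_bot_of_finrank_lt hrank]
    simpa [L] using mul_mem_exteriorPower hΘ (list_prod_mem_exteriorPower hL)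
  simpa [hΘL, hFL] using (contractLeft_mul_of_mem_exteriorPower F hΘ L.prod).symm

/-- Let `d ≥ 2` and `2 ≤ k ≤ d`. Let `V` be a complex vector space with basis
`{e_i^α : 1 ≤ i ≤ d, 1 ≤ α ≤ k−1}` and, for each `α`, let `f_α ∈ V^*` vanish on all `e_i^β` with
`β ≠ α`. In `Λ•V` set `μ^α = e_1^α ∧ ⋯ ∧ e_d^α` and `Θ = θ_1 ∧ ⋯ ∧ θ_d` with
`θ_i = Σ_α e_i^α`. Then `(Σ_α ι_{f_α}Θ) ∧ (ι_{f_1}μ^1) ∧ ⋯ ∧ (ι_{f_{k−1}}μ^{k−1}) = 0`.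
Here the interior product `ι_f` is `CliffordAlgebra.contractLeft f` on
`ExteriorAlgebra ℂ V = CliffordAlgebra 0`, the odd degree `−1` derivation with `ι_f v = f v`. -/
theorem stmt_3 (d k : ℕ) (hd : 2 ≤ d) (hk : 2 ≤ k) (hkd : k ≤ d)
    (V : Type*) [AddCommGroup V] [Module ℂ V]
    (e : Module.Basis (Fin d × Fin (k - 1)) ℂ V)
    (f : Fin (k - 1) → Module.Dual ℂ V)
    (hf : ∀ (α β : Fin (k - 1)) (i : Fin d), β ≠ α → f α (e (i, β)) = 0) :
    (∑ α : Fin (k - 1),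
        CliffordAlgebra.contractLeft (f α)
          ((List.ofFn fun i : Fin d =>
            ExteriorAlgebra.ι ℂ (∑ β : Fin (k - 1), e (i, β))).prod)) *
      (List.ofFn fun α : Fin (k - 1) =>
        CliffordAlgebra.contractLeft (f α)
          ((List.ofFn fun i : Fin d => ExteriorAlgebra.ι ℂ (e (i, α))).prod)).prod = 0 :=
  stmt_3_general d k hd hkd V e f hf
end

section
/- Let d ≥ 1 and k ≥ 2 be integers, let t_1, …, t_k be positive reals, and set T = t_1 + ⋯ + t_k. Define E : (ℂ^d)^{k−1} → ℂ by E(w) = exp(−Σ_{β=1}^{k−1} ‖w^β‖²/(4t_β) − ‖Σ_{β=1}^{k−1} w^β‖²/(4t_k)). For a real-differentiable function F : (ℂ^d)^{k−1} → ℂ define the Wirtinger derivative ∂F/∂w_i^β (w) := (1/2)(DF(w)(e_i^β) − i·DF(w)(i·e_i^β)), where DF(w) is the real Fréchet derivative of F at w and e_i^β is the standard basis vector of the (β,i) coordinate. Then for every α ∈ {1,…,k−1} and i ∈ {1,…,d}: ∂E/∂w_i^α (w) − Σ_{β=1}^{k−1} (t_β/T) ∂E/∂w_i^β (w) = −(conj(w_i^α)/(4t_α))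 · E(w). -/
/-!
Write `E = exp ψ` with `ψ` real. Since the Wirtinger derivative of `‖x‖²` in `x_i` is `conj x_i`,
`∂E/∂w_i^β = -(conj w_i^β / (4 t_β) + conj S_i / (4 t_k)) E` with `S = Σ_γ w^γ`.
Averaging with the weights `t_β / T`, the first terms give `conj S_i / (4T)` and the second ones
`(1 - t_k / T) conj S_i / (4 t_k)`; together this is `conj S_i / (4 t_k)`, which cancels the
`S`-term of `∂E/∂w_i^α`.
-/

/-- The Gaussian factor `E(w) = exp(−Σ_β ‖w^β‖²/(4t_β) − ‖Σ_β w^β‖²/(4t_k))`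
(with `k = m + 1`), valued in `ℂ`. -/
noncomputable def gaussE (d m : ℕ) (t : Fin (m + 1) → ℝ)
    (w : Fin m → EuclideanSpace ℂ (Fin d)) : ℂ :=
  ((Real.exp (-(∑ β, ‖w β‖ ^ 2 / (4 * t β.castSucc)) -
      ‖∑ β, w β‖ ^ 2 / (4 * t (Fin.last m))) : ℝ) : ℂ)

/-- The (holomorphic) Wirtinger derivative `∂F/∂w_i^β (w) = (1/2)(DF(w)(e_i^β) − i·DF(w)(i·e_i^β))`
of a function `F : (ℂ^d)^m → ℂ`, where `DF(w)` is the real Fréchet derivative of `F` at `w` and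
`e_i^β` is the standard basis vector of the `(β,i)` coordinate. -/
noncomputable def wirt (d m : ℕ) (F : (Fin m → EuclideanSpace ℂ (Fin d)) → ℂ)
    (β : Fin m) (i : Fin d) (w : Fin m → EuclideanSpace ℂ (Fin d)) : ℂ :=
  (1 / 2 : ℂ) * ((fderiv ℝ F w) (Pi.single β (EuclideanSpace.single i 1)) -
    Complex.I * (fderiv ℝ F w) (Pi.single β (EuclideanSpace.single i Complex.I)))

open ComplexConjugate

theorem EuclideanSpace.real_inner_single_sub_I_mul {ι : Type*} [Fintype ι] [DecidableEq ι]
    (x : EuclideanSpace ℂ ι) (i : ι) :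
    (inner ℝ x (EuclideanSpace.single i 1) : ℂ) -
        Complex.I * inner ℝ x (EuclideanSpace.single i Complex.I) =
      conj (x i) := by
  simp only [PiLp.inner_apply, PiLp.single_apply, apply_ite, inner_zero_right,
    Finset.sum_ite_eq', Finset.mem_univ, if_true, Complex.inner]
  apply Complex.ext <;> simp

theorem fderiv_ofReal_exp_apply {E : Type*} [NormedAddCommGroup E] [NormedSpace ℝ E]
    {f : E → ℝ} {x : E} (hf : DifferentiableAt ℝ f x) (v : E) :
    fderiv ℝ (fun y => (Real.exp (f y) : ℂ)) x v = Real.exp (f x) * fderiv ℝ f x v := by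
  have h : HasFDerivAt (fun y => (Real.exp (f y) : ℂ))
      (Complex.ofRealCLM.comp (Real.exp (f x) • fderiv ℝ f x)) x :=
    Complex.ofRealCLM.hasFDerivAt.comp x hf.hasFDerivAt.exp
  rw [h.fderiv]
  simp

theorem sum_div_sum_mul_div_add_div_last {K : Type*} [Field K] {m : ℕ} (t : Fin (m + 1) → K)
    (ht : ∀ j, t j ≠ 0) (hT : ∑ j, t j ≠ 0) (a : Fin m → K) :
    ∑ β, t β.castSucc / (∑ j, t j) * (a β / t β.castSucc + (∑ γ, a γ) / t (Fin.last m)) =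
      (∑ γ, a γ) / t (Fin.last m) := by
  have hterm : ∀ β, t β.castSucc / (∑ j, t j) * (a β / t β.castSucc + (∑ γ, a γ) / t (Fin.last m))
      = a β / (∑ j, t j) + t β.castSucc * ((∑ γ, a γ) / (t (Fin.last m) * ∑ j, t j)) := by
    intro β
    field_simp [ht β.castSucc, ht (Fin.last m)]
  have hsplit : ∑ β : Fin m, t β.castSucc = (∑ j, t j) - t (Fin.last m) := by
    rw [Fin.sum_univ_castSucc]; ring
  rw [Finset.sum_congr rfl fun β _ => hterm β, Finset.sum_add_distrib, ← Finset.sum_div,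
    ← Finset.sum_mul, hsplit]
  field_simp [ht (Fin.last m)]
  ring

section Gaussian

variable {d m : ℕ} (t : Fin (m + 1) → ℝ)

noncomputable def gaussExponent (w : Fin m → EuclideanSpace ℂ (Fin d)) : ℝ :=
  -(∑ β, ‖w β‖ ^ 2 / (4 * t β.castSucc)) - ‖∑ β, w β‖ ^ 2 / (4 * t (Fin.last m))

open ContinuousLinearMap in
theorem hasFDerivAt_gaussExponent (w : Fin m → EuclideanSpace ℂ (Fin d)) :
    HasFDerivAt (gaussExponent t)
      (-(∑ β, (4 * t β.castSucc)⁻¹ • 2 • (innerSL ℝ (w β)).comp (proj β)) -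
        (4 * t (Fin.last m))⁻¹ • 2 • (innerSL ℝ (∑ γ, w γ)).comp (∑ γ, proj γ)) w := by
  have hsum : HasFDerivAt (fun w : Fin m → EuclideanSpace ℂ (Fin d) => ∑ γ, w γ)
      (∑ γ, proj γ : (Fin m → EuclideanSpace ℂ (Fin d)) →L[ℝ] _) w :=
    HasFDerivAt.fun_sum fun γ _ => hasFDerivAt_apply γ w
  unfold gaussExponent
  simp only [div_eq_inv_mul]
  exact (HasFDerivAt.fun_sum fun β _ =>
      ((hasFDerivAt_apply β w).norm_sq).const_mul _).neg.sub (hsum.norm_sq.const_mul _)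

open ContinuousLinearMap in
theorem fderiv_gaussExponent_single (w : Fin m → EuclideanSpace ℂ (Fin d)) (β : Fin m)
    (u : EuclideanSpace ℂ (Fin d)) :
    fderiv ℝ (gaussExponent t) w (Pi.single β u) =
      -(inner ℝ (w β) u / (2 * t β.castSucc) + inner ℝ (∑ γ, w γ) u / (2 * t (Fin.last m))) := by
  rw [(hasFDerivAt_gaussExponent t w).fderiv]
  simp only [sub_apply, neg_apply, sum_apply, smul_apply, comp_apply, proj_apply, Pi.single_apply,
    coe_innerSL_apply, apply_ite (inner ℝ _), inner_zero_right, smul_ite, smul_zero, smul_eq_mul,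
    mul_ite, mul_zero, Finset.sum_ite_eq', Finset.mem_univ, if_true, sum_inner, nsmul_eq_mul]
  ring

theorem wirt_gaussE (β : Fin m) (i : Fin d) (w : Fin m → EuclideanSpace ℂ (Fin d)) :
    wirt d m (gaussE d m t) β i w =
      -(1 / 4) * (conj (w β i) / t β.castSucc + (∑ γ, conj (w γ i)) / t (Fin.last m)) *
        gaussE d m t w := by
  have h1 := EuclideanSpace.real_inner_single_sub_I_mul (w β) i
  have h2 := EuclideanSpace.real_inner_single_sub_I_mul (∑ γ, w γ) i
  rw [WithLp.ofLp_sum, Finset.sum_apply, map_sum] at h2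
  have hE : gaussE d m t = fun w => (Real.exp (gaussExponent t w) : ℂ) := rfl
  have hψ := (hasFDerivAt_gaussExponent t w).differentiableAt
  rw [wirt, hE, fderiv_ofReal_exp_apply hψ, fderiv_ofReal_exp_apply hψ,
    fderiv_gaussExponent_single, fderiv_gaussExponent_single]
  beta_reduce
  set E := Real.exp (gaussExponent t w)
  push_cast
  linear_combination (-(1 / 4) * E / t β.castSucc) * h1 + (-(1 / 4) * E / t (Fin.last m)) * h2

end Gaussian

theorem stmt_13_general (d m : ℕ)
    (t : Fin (m + 1) → ℝ) (ht : ∀ j, 0 < t j)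
    (α : Fin m) (i : Fin d) (w : Fin m → EuclideanSpace ℂ (Fin d)) :
    wirt d m (gaussE d m t) α i w -
      ∑ β : Fin m, ((t β.castSucc / ∑ γ, t γ : ℝ) : ℂ) * wirt d m (gaussE d m t) β i w =
    -(starRingEnd ℂ (w α i) / ((4 * t α.castSucc : ℝ) : ℂ)) * gaussE d m t w := by
  have ht' : ∀ j, (t j : ℂ) ≠ 0 := fun j => Complex.ofReal_ne_zero.2 (ht j).ne'
  have hT : ∑ j, (t j : ℂ) ≠ 0 := by
    exact_mod_cast (Finset.sum_pos (fun j _ => ht j) Finset.univ_nonempty).ne'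
  have hweights := sum_div_sum_mul_div_add_div_last (fun j => (t j : ℂ)) ht' hT
    (fun γ => conj (w γ i))
  simp only [wirt_gaussE]
  set E := gaussE d m t w
  set S := ∑ γ, conj (w γ i)
  have hfactor : ∑ β, ((t β.castSucc / ∑ γ, t γ : ℝ) : ℂ) *
      (-(1 / 4) * (conj (w β i) / t β.castSucc + S / t (Fin.last m)) * E) =
      -(1 / 4) * E * ∑ β, (t β.castSucc : ℂ) / (∑ j, (t j : ℂ)) *
        (conj (w β i) / t β.castSucc + S / t (Fin.last m)) := by
    rw [Finset.mul_sum]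
    refine Finset.sum_congr rfl fun β _ => ?_
    push_cast
    ring
  rw [hfactor, hweights]
  push_cast
  ring

/-- For `d ≥ 1`, `k ≥ 2` (written `k = m + 1`, `m ≥ 1`), positive reals
`t_1, …, t_k` with `T = t_1 + ⋯ + t_k`, every `α ∈ {1,…,k−1}`, `i ∈ {1,…,d}` and
`w ∈ (ℂ^d)^{k−1}`:
`∂E/∂w_i^α (w) − Σ_β (t_β/T) ∂E/∂w_i^β (w) = −(conj(w_i^α)/(4t_α)) · E(w)`. -/
theorem stmt_13 (d m : ℕ) (hd : 1 ≤ d) (hm : 1 ≤ m)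
    (t : Fin (m + 1) → ℝ) (ht : ∀ j, 0 < t j)
    (α : Fin m) (i : Fin d) (w : Fin m → EuclideanSpace ℂ (Fin d)) :
    wirt d m (gaussE d m t) α i w -
      ∑ β : Fin m, ((t β.castSucc / ∑ γ, t γ : ℝ) : ℂ) * wirt d m (gaussE d m t) β i w =
    -(starRingEnd ℂ (w α i) / ((4 * t α.castSucc : ℝ) : ℂ)) * gaussE d m t w :=
  stmt_13_general d m t ht α i w
end

section
/- Let d ≥ 1 be an integer. For a real-differentiable function f : ℂ^d → ℂ define the antiholomorphic Wirtinger derivative ∂f/∂ū_i (u) := (1/2)(Df(u)(e_i) + i·Df(u)(i·e_i)), where Df(u) is the real Fréchet derivative of f at u and e_i the i-th standard basis vector of ℂ^d. Then for every u ∈ ℂ^d with u ≠ 0, Σ_{i=1}^{d} ∂/∂ū_i ( conj(u_i) / ‖u‖^{2d} ) (u) = 0. -/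
/-!
Writing the coefficient as `conj (u i) * φ (‖u‖²)` with `φ t = t ^ (-d)`, the Leibniz rule
gives `∂/∂ū_i = φ (‖u‖²) + conj (u i) * φ' (‖u‖²) * u i`, because `∂ conj (u i) / ∂ū_i = 1`
and a radial function `φ (‖u‖²)` has `∂/∂ū_i = φ' (‖u‖²) * u i`. Summing over `i` leaves
`d φ(t) + t φ'(t)` at `t = ‖u‖²`, which vanishes by Euler's relation for `t ^ (-d)`,
homogeneous of degree `-d`.
-/

open Complex

open scoped ComplexConjugate

section Wirtinger

variable {E : Type*} [NormedAddCommGroup E] [NormedSpace ℂ E]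

/-- `wirtingerBar f u (EuclideanSpace.single i 1)` is the Wirtinger derivative `∂f/∂ū_i (u)`. -/
noncomputable def wirtingerBar (f : E → ℂ) (u w : E) : ℂ :=
  (1 / 2) * (fderiv ℝ f u w + I * fderiv ℝ f u (I • w))

theorem wirtingerBar_mul {f g : E → ℂ} {u : E} (hf : DifferentiableAt ℝ f u)
    (hg : DifferentiableAt ℝ g u) (w : E) :
    wirtingerBar (fun v => f v * g v) u w =
      wirtingerBar f u w * g u + f u * wirtingerBar g u w := by
  simp only [wirtingerBar, ← Pi.mul_def, fderiv_mul hf hg, add_apply, smul_apply, smul_eq_mul]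
  ring

theorem hasFDerivAt_conj_comp (L : E →L[ℂ] ℂ) (u : E) :
    HasFDerivAt (fun v => conj (L v))
      (conjCLE.toContinuousLinearMap.comp (L.restrictScalars ℝ)) u :=
  (conjCLE.toContinuousLinearMap.comp (L.restrictScalars ℝ)).hasFDerivAt

theorem wirtingerBar_conj_comp (L : E →L[ℂ] ℂ) (u w : E) :
    wirtingerBar (fun v => conj (L v)) u w = conj (L w) := by
  simp only [wirtingerBar, (hasFDerivAt_conj_comp L u).fderiv, ContinuousLinearMap.comp_apply,
    ContinuousLinearMap.coe_restrictScalars', ContinuousLinearEquiv.coe_coe, conjCLE_apply,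
    L.map_smul, smul_eq_mul, map_mul, conj_I]
  linear_combination (-(1 / 2) * conj (L w)) * I_sq

end Wirtinger

section Radial

variable {E : Type*} [NormedAddCommGroup E] [InnerProductSpace ℂ E]

theorem differentiableAt_ofReal_comp_norm_sq {φ : ℝ → ℝ} {u : E}
    (hφ : DifferentiableAt ℝ φ (‖u‖ ^ 2)) :
    DifferentiableAt ℝ (fun v : E => (φ (‖v‖ ^ 2) : ℂ)) u := by
  let := InnerProductSpace.complexToReal (G := E)
  exact ofRealCLM.differentiableAt.comp u (hφ.comp u (differentiableAt_id.norm_sq ℝ))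

theorem wirtingerBar_ofReal_comp_norm_sq {φ : ℝ → ℝ} {φ' : ℝ} {u : E}
    (hφ : HasDerivAt φ φ' (‖u‖ ^ 2)) (w : E) :
    wirtingerBar (fun v => (φ (‖v‖ ^ 2) : ℂ)) u w = φ' * inner ℂ w u := by
  let := InnerProductSpace.complexToReal (G := E)
  have h : HasFDerivAt (fun v : E => (φ (‖v‖ ^ 2) : ℂ))
      (ofRealCLM.comp (φ' • 2 • innerSL ℝ u)) u :=
    ofRealCLM.hasFDerivAt.comp u (hφ.comp_hasFDerivAt u (hasStrictFDerivAt_norm_sq u).hasFDerivAt)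
  rw [wirtingerBar, h.fderiv, ← inner_conj_symm w u]
  simp only [ContinuousLinearMap.comp_apply, ofRealCLM_apply, smul_apply, innerSL_apply_apply,
    smul_eq_mul, real_inner_eq_re_inner ℂ, inner_smul_right]
  apply Complex.ext <;> simp [-inner_conj_symm] <;> ring

theorem wirtingerBar_conj_mul_ofReal_comp_norm_sq (L : E →L[ℂ] ℂ) {φ : ℝ → ℝ} {φ' : ℝ} {u : E}
    (hφ : HasDerivAt φ φ' (‖u‖ ^ 2)) (w : E) :
    wirtingerBar (fun v => conj (L v) * (φ (‖v‖ ^ 2) : ℂ)) u w =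
      conj (L w) * φ (‖u‖ ^ 2) + conj (L u) * φ' * inner ℂ w u := by
  rw [wirtingerBar_mul (hasFDerivAt_conj_comp L u).differentiableAt
    (differentiableAt_ofReal_comp_norm_sq hφ.differentiableAt), wirtingerBar_conj_comp,
    wirtingerBar_ofReal_comp_norm_sq hφ, mul_assoc]

end Radial

theorem EuclideanSpace.sum_conj_mul_self {ι : Type*} [Fintype ι] (u : EuclideanSpace ℂ ι) :
    ∑ i, conj (u i) * u i = (‖u‖ ^ 2 : ℝ) := by
  simp_rw [← RCLike.inner_apply']
  rw [← PiLp.inner_apply, inner_self_eq_norm_sq_to_K]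
  simp

theorem stmt_16_general (d : ℕ) (u : EuclideanSpace ℂ (Fin d)) (hu : u ≠ 0) :
    ∑ i : Fin d, (1 / 2 : ℂ) *
      ((fderiv ℝ (fun v : EuclideanSpace ℂ (Fin d) =>
            starRingEnd ℂ (v i) / ((‖v‖ ^ (2 * d) : ℝ) : ℂ)) u)
          (EuclideanSpace.single i 1) +
        Complex.I *
          (fderiv ℝ (fun v : EuclideanSpace ℂ (Fin d) =>
              starRingEnd ℂ (v i) / ((‖v‖ ^ (2 * d) : ℝ) : ℂ)) u)
            (EuclideanSpace.single i Complex.I)) = 0 := by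
  let f (i : Fin d) (v : EuclideanSpace ℂ (Fin d)) : ℂ :=
    conj (EuclideanSpace.proj i v) * (((‖v‖ ^ 2) ^ (-(d : ℤ)) : ℝ) : ℂ)
  have hf (i : Fin d) :
      (fun v : EuclideanSpace ℂ (Fin d) => conj (v i) / ((‖v‖ ^ (2 * d) : ℝ) : ℂ)) = f i := by
    funext v; simp [f, div_eq_mul_inv, pow_mul, zpow_neg]
  have hI (i : Fin d) : EuclideanSpace.single i I = I • EuclideanSpace.single i (1 : ℂ) := by
    ext j; simp [PiLp.single_apply]
  set t := ‖u‖ ^ 2 with ht_def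
  have ht : t ≠ 0 := pow_ne_zero _ (norm_ne_zero_iff.mpr hu)
  have hφ := hasDerivAt_zpow (-(d : ℤ)) t (Or.inl ht)
  calc _ = ∑ i, wirtingerBar (f i) u (EuclideanSpace.single i 1) := by simp only [hf, hI]; rfl
    _ = ∑ i, ((t ^ (-(d : ℤ)) : ℝ) +
          ((-(d : ℤ) : ℤ) * t ^ (-(d : ℤ) - 1) : ℝ) * (conj (u i) * u i)) := by
      refine Finset.sum_congr rfl fun i _ => ?_
      rw [wirtingerBar_conj_mul_ofReal_comp_norm_sq _ hφ, EuclideanSpace.inner_single_left]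
      simp only [← ht_def, PiLp.proj_apply, PiLp.single_eq_same, map_one, one_mul, ofReal_mul,
        ofReal_intCast]
      ring
    _ = ((d * t ^ (-(d : ℤ)) + (-(d : ℤ) : ℤ) * t ^ (-(d : ℤ) - 1) * t : ℝ) : ℂ) := by
      rw [Finset.sum_add_distrib, ← Finset.mul_sum, EuclideanSpace.sum_conj_mul_self, ← ht_def]
      simp
    _ = 0 := by
      rw [zpow_sub_one₀ ht]
      field_simp
      push_cast
      ring

/-- For `d ≥ 1` and `u ∈ ℂ^d` with `u ≠ 0`,
`Σ_{i=1}^{d} ∂/∂ū_i (conj(u_i)/‖u‖^{2d}) (u) = 0`, where the antiholomorphic Wirtinger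
derivative of a real-differentiable `f : ℂ^d → ℂ` is
`∂f/∂ū_i (u) = (1/2)(Df(u)(e_i) + i·Df(u)(i·e_i))` with `Df(u)` the real Fréchet derivative
of `f` at `u` and `e_i` the `i`-th standard basis vector of `ℂ^d`. -/
theorem stmt_16 (d : ℕ) (hd : 1 ≤ d) (u : EuclideanSpace ℂ (Fin d)) (hu : u ≠ 0) :
    ∑ i : Fin d, (1 / 2 : ℂ) *
      ((fderiv ℝ (fun v : EuclideanSpace ℂ (Fin d) =>
            starRingEnd ℂ (v i) / ((‖v‖ ^ (2 * d) : ℝ) : ℂ)) u)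
          (EuclideanSpace.single i 1) +
        Complex.I *
          (fderiv ℝ (fun v : EuclideanSpace ℂ (Fin d) =>
              starRingEnd ℂ (v i) / ((‖v‖ ^ (2 * d) : ℝ) : ℂ)) u)
            (EuclideanSpace.single i Complex.I)) = 0 :=
  stmt_16_general d u hu
end
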